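/- Asymptotics of the WZ summand in k: Let a, b be complex numbers with Re(b) < 1, and let F(n,k) be as in the WZ-pair for Kummer's theorem (with the same nonvanishing hypotheses). Then for each fixed nonnegative integer n, |F(n,k)| is asymptotic to a constant times k^{2Re(b)−2} as k → ∞; in particular F(n,k) → 0 as k → ∞. -/

import Mathlib

open Complex Finset Filter Topology

/-- The Pochhammer symbol `(x)_k = x (x+1) ⋯ (x+k-1)`. -/
noncomputable def poch (x : ℂ) (k : ℕ) : ℂ := (ascPochhammer ℂ k).eval x

/-- The WZ summand for Kummer's theorem:
`F(n,k) = (a+2n)_k (b)_k (-1)^k / ((1+a+2n-b)_k k!) ·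
  Γ(1+a+2n) Γ(1+a/2+n-b) / (Γ(1+a/2+n) Γ(1+a+2n-b))`. -/
noncomputable def kummerF (a b : ℂ) (n k : ℕ) : ℂ :=
  poch (a + 2 * n) k * poch b k * (-1 : ℂ) ^ k /
    (poch (1 + a + 2 * n - b) k * (Nat.factorial k : ℂ)) *
  (Gamma (1 + a + 2 * n) * Gamma (1 + a / 2 + n - b) /
    (Gamma (1 + a / 2 + n) * Gamma (1 + a + 2 * n - b)))

/-- The WZ certificate `C(n,k) = -(b-1)k / ((1+a+2n-b+k)(a+2n))`. -/
noncomputable def kummerC (a b : ℂ) (n k : ℕ) : ℂ :=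
  -((b - 1) * k) / ((1 + a + 2 * n - b + k) * (a + 2 * n))

/-- `G(n,k) = F(n,k) · C(n,k)`. -/
noncomputable def kummerG (a b : ℂ) (n k : ℕ) : ℂ :=
  kummerF a b n k * kummerC a b n k

/-!
Gauss's product formula `Γ(x) = lim k^x k! / (x (x+1) ⋯ (x+k))` says `(x)_k ~ k^(x-1) k! / Γ(x)`,
hence `(x)_k / (y)_k ~ Γ(y) / Γ(x) · k^(x-y)`. Up to the constant Gamma factor and the sign, `F(n,k)`
is the product of two such ratios, `(a+2n)_k / (1+a+2n-b)_k` and `(b)_k / (1)_k`, whose exponents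
are both `b - 1`; so `|F(n,k)|` is a constant times `k^(2 Re b - 2)`, which tends to `0` when
`Re b < 1`.
-/

open Asymptotics
open scoped Nat

theorem Asymptotics.IsEquivalent.norm {α β : Type*} [NormedAddCommGroup β] {l : Filter α}
    {u v : α → β} (h : u ~[l] v) : (fun x ↦ ‖u x‖) ~[l] fun x ↦ ‖v x‖ := by
  refine IsLittleO.norm_right (IsBigO.trans_isLittleO (IsBigO.of_bound' ?_) h.isLittleO)
  exact Eventually.of_forall fun x ↦ by simpa using abs_norm_sub_norm_le (u x) (v x)

lemma poch_one (k : ℕ) : poch 1 k = k ! := by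
  simp [poch, ascPochhammer_eval_one]

lemma poch_eq_prod_range (x : ℂ) (k : ℕ) : poch x k = ∏ j ∈ range k, (x + j) := by
  induction k with
  | zero => simp [poch]
  | succ k ih => rw [poch, ascPochhammer_succ_eval, ← poch, ih, prod_range_succ]

lemma GammaSeq_eq_div_poch (x : ℂ) (k : ℕ) :
    GammaSeq x k = (k : ℂ) ^ x * k ! / (poch x k * (x + k)) := by
  rw [GammaSeq, prod_range_succ, poch_eq_prod_range]

lemma Gamma_ne_zero_of_add_natCast_ne_zero {x : ℂ} (hx : ∀ j : ℕ, x + j ≠ 0) : Gamma x ≠ 0 :=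
  Gamma_ne_zero fun m hm ↦ hx m (by rw [hm, neg_add_cancel])

lemma add_natCast_ne_zero_of_Gamma_one_add_ne_zero {x : ℂ} (hx : x ≠ 0)
    (hΓ : Gamma (1 + x) ≠ 0) (j : ℕ) : x + j ≠ 0 := by
  rcases j with _ | m
  · simpa using hx
  · intro h
    exact hΓ ((Gamma_eq_zero_iff _).mpr ⟨m, by push_cast at h ⊢; linear_combination h⟩)

theorem poch_isEquivalent {x : ℂ} (hx : ∀ j : ℕ, x + j ≠ 0) :
    (fun k ↦ poch x k) ~[atTop] fun k ↦ (Gamma x)⁻¹ * (k : ℂ) ^ (x - 1) * k ! := by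
  have hΓ := Gamma_ne_zero_of_add_natCast_ne_zero hx
  refine isEquivalent_of_tendsto_one ?_
  have hlim : Tendsto (fun k : ℕ ↦ Gamma x * (GammaSeq x k)⁻¹ * (k / (k + x))) atTop
      (𝓝 (Gamma x * (Gamma x)⁻¹ * 1)) :=
    (tendsto_const_nhds.mul ((GammaSeq_tendsto_Gamma x).inv₀ hΓ)).mul
      (tendsto_natCast_div_add_atTop x)
  rw [mul_inv_cancel₀ hΓ, mul_one] at hlim
  refine hlim.congr' ?_
  filter_upwards [eventually_ne_atTop 0] with k hk
  have hk' : (k : ℂ) ≠ 0 := Nat.cast_ne_zero.mpr hk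
  have hkx : (k : ℂ) + x ≠ 0 := by rw [add_comm]; exact hx k
  have hkpow : (k : ℂ) ^ x ≠ 0 := by simp [cpow_eq_zero_iff, hk']
  have hfact : (k ! : ℂ) ≠ 0 := by exact_mod_cast k.factorial_ne_zero
  simp only [Pi.div_apply]
  rw [GammaSeq_eq_div_poch, cpow_sub _ _ hk', cpow_one]
  field_simp
  ring

theorem poch_div_poch_isEquivalent {x y : ℂ} (hx : ∀ j : ℕ, x + j ≠ 0)
    (hy : ∀ j : ℕ, y + j ≠ 0) :
    (fun k ↦ poch x k / poch y k) ~[atTop] fun k ↦ Gamma y / Gamma x * (k : ℂ) ^ (x - y) := by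
  refine ((poch_isEquivalent hx).div (poch_isEquivalent hy)).congr_right ?_
  filter_upwards [eventually_ne_atTop 0] with k hk
  have hk' : (k : ℂ) ≠ 0 := Nat.cast_ne_zero.mpr hk
  have hfact : (k ! : ℂ) ≠ 0 := by exact_mod_cast k.factorial_ne_zero
  have hkpow : (k : ℂ) ^ (y - 1) ≠ 0 := by simp [cpow_eq_zero_iff, hk']
  have hsplit : (k : ℂ) ^ (x - 1) = (k : ℂ) ^ (x - y) * (k : ℂ) ^ (y - 1) := by
    rw [← cpow_add _ _ hk']; ring_nf
  simp only [Pi.div_apply, hsplit]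
  field_simp

theorem norm_poch_div_poch_isEquivalent {x y : ℂ} (hx : ∀ j : ℕ, x + j ≠ 0)
    (hy : ∀ j : ℕ, y + j ≠ 0) :
    (fun k ↦ ‖poch x k / poch y k‖) ~[atTop]
      fun k ↦ ‖Gamma y / Gamma x‖ * (k : ℝ) ^ (x.re - y.re) := by
  refine (poch_div_poch_isEquivalent hx hy).norm.congr_right ?_
  filter_upwards [eventually_ne_atTop 0] with k hk
  rw [norm_mul, norm_natCast_cpow_of_pos (Nat.pos_of_ne_zero hk), sub_re]

lemma norm_kummerF (a b : ℂ) (n k : ℕ) :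
    ‖kummerF a b n k‖ =
      ‖Gamma (1 + a + 2 * n) * Gamma (1 + a / 2 + n - b) /
        (Gamma (1 + a / 2 + n) * Gamma (1 + a + 2 * n - b))‖ *
      (‖poch (a + 2 * n) k / poch (1 + a + 2 * n - b) k‖ * ‖poch b k / poch 1 k‖) := by
  have hF : kummerF a b n k = (-1) ^ k *
      (Gamma (1 + a + 2 * n) * Gamma (1 + a / 2 + n - b) /
        (Gamma (1 + a / 2 + n) * Gamma (1 + a + 2 * n - b)) *
      (poch (a + 2 * n) k / poch (1 + a + 2 * n - b) k * (poch b k / poch 1 k))) := by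
    rw [kummerF, poch_one]; ring
  rw [hF, norm_mul, norm_pow, norm_neg, norm_one, one_pow, one_mul, norm_mul, norm_mul]

theorem norm_kummerF_isEquivalent {a b : ℂ} {n : ℕ} (hA : ∀ j : ℕ, a + 2 * n + j ≠ 0)
    (hA' : ∀ j : ℕ, 1 + a + 2 * n - b + j ≠ 0) (hb : ∀ j : ℕ, b + j ≠ 0) :
    (fun k ↦ ‖kummerF a b n k‖) ~[atTop] fun k ↦
      ‖Gamma (1 + a + 2 * n) * Gamma (1 + a / 2 + n - b) /
        (Gamma (1 + a / 2 + n) * Gamma (1 + a + 2 * n - b))‖ *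
      (‖Gamma (1 + a + 2 * n - b) / Gamma (a + 2 * n)‖ * ‖Gamma 1 / Gamma b‖) *
        (k : ℝ) ^ (2 * b.re - 2) := by
  have h1 : ∀ j : ℕ, (1 : ℂ) + j ≠ 0 := fun j ↦ by
    rw [add_comm]; exact Nat.cast_add_one_ne_zero j
  have hpoch := (norm_poch_div_poch_isEquivalent hA hA').mul
    (norm_poch_div_poch_isEquivalent hb h1)
  refine ((IsEquivalent.refl (u := fun _ ↦ _)).mul hpoch).congr_left
    (Eventually.of_forall fun k ↦ (norm_kummerF a b n k).symm) |>.congr_right ?_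
  filter_upwards [eventually_ne_atTop 0] with k hk
  have hk : (0 : ℝ) < k := Nat.cast_pos.mpr (Nat.pos_of_ne_zero hk)
  simp only [Pi.mul_apply]
  rw [mul_mul_mul_comm, ← Real.rpow_add hk]
  simp only [add_re, sub_re, mul_re, one_re, natCast_re]
  ring_nf

theorem kummer_WZ_summand_asymptotics_general (a b : ℂ) (hb : b.re < 1)
    (hbn : ∀ m : ℕ, b ≠ -(m : ℂ))
    (h0 : ∀ n : ℕ, a + 2 * (n : ℂ) ≠ 0)
    (h1 : ∀ n k : ℕ, 1 + a + 2 * (n : ℂ) - b + (k : ℂ) ≠ 0)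
    (h3 : ∀ n : ℕ, Gamma (1 + a + 2 * (n : ℂ)) ≠ 0)
    (h4 : ∀ n : ℕ, Gamma (1 + a / 2 + (n : ℂ) - b) ≠ 0)
    (h5 : ∀ n : ℕ, Gamma (1 + a / 2 + (n : ℂ)) ≠ 0)
    (h6 : ∀ n : ℕ, Gamma (1 + a + 2 * (n : ℂ) - b) ≠ 0) :
    ∀ n : ℕ,
      (∃ c : ℝ, 0 < c ∧
        Asymptotics.IsEquivalent atTop
          (fun k : ℕ => ‖kummerF a b n k‖)
          (fun k : ℕ => c * (k : ℝ) ^ (2 * b.re - 2))) ∧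
      Tendsto (fun k : ℕ => kummerF a b n k) atTop (𝓝 0) := by
  intro n
  have hA : ∀ j : ℕ, a + 2 * n + j ≠ 0 :=
    add_natCast_ne_zero_of_Gamma_one_add_ne_zero (h0 n) (by rw [← add_assoc]; exact h3 n)
  have hb' : ∀ j : ℕ, b + j ≠ 0 := fun j h ↦ hbn j (eq_neg_of_add_eq_zero_left h)
  have hequiv := norm_kummerF_isEquivalent hA (h1 n) hb'
  refine ⟨⟨_, ?_, hequiv⟩, ?_⟩
  · simp [h3 n, h4 n, h5 n, h6 n, Gamma_ne_zero_of_add_natCast_ne_zero hA,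
      Gamma_ne_zero_of_add_natCast_ne_zero hb']
  · rw [tendsto_zero_iff_norm_tendsto_zero]
    refine hequiv.symm.tendsto_nhds ?_
    simpa using ((tendsto_rpow_neg_atTop (by linarith : 0 < 2 - 2 * b.re)).comp
      tendsto_natCast_atTop_atTop).const_mul _

/-- Asymptotics of the WZ summand in `k`: for `Re b < 1`, for each fixed `n`,
`|F(n,k)|` is asymptotic to a positive constant times `k^{2 Re b - 2}` as `k → ∞`;
in particular `F(n,k) → 0`. -/
theorem kummer_WZ_summand_asymptotics (a b : ℂ) (hb : b.re < 1)
    (hbn : ∀ m : ℕ, b ≠ -(m : ℂ))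
    (h0 : ∀ n : ℕ, a + 2 * (n : ℂ) ≠ 0)
    (h1 : ∀ n k : ℕ, 1 + a + 2 * (n : ℂ) - b + (k : ℂ) ≠ 0)
    (h2 : ∀ n m : ℕ, 1 + a + 2 * (n : ℂ) - b ≠ -(m : ℂ))
    (h3 : ∀ n : ℕ, Gamma (1 + a + 2 * (n : ℂ)) ≠ 0)
    (h4 : ∀ n : ℕ, Gamma (1 + a / 2 + (n : ℂ) - b) ≠ 0)
    (h5 : ∀ n : ℕ, Gamma (1 + a / 2 + (n : ℂ)) ≠ 0)
    (h6 : ∀ n : ℕ, Gamma (1 + a + 2 * (n : ℂ) - b) ≠ 0) :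
    ∀ n : ℕ,
      (∃ c : ℝ, 0 < c ∧
        Asymptotics.IsEquivalent atTop
          (fun k : ℕ => ‖kummerF a b n k‖)
          (fun k : ℕ => c * (k : ℝ) ^ (2 * b.re - 2))) ∧
      Tendsto (fun k : ℕ => kummerF a b n k) atTop (𝓝 0) :=
  kummer_WZ_summand_asymptotics_general a b hb hbn h0 h1 h3 h4 h5 h6
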